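/- Let G, S, O, Π be random variables on a finite probability space. Suppose (1) P(Π = π | S = s, G = g, O = o) = P(Π = π | S = s, O = o) for all values with positive probability (task-symbolic sufficiency), and (2) S and O are conditionally independent given G. Then for all g, o with P(G = g, O = o) > 0, P(Π = π | G = g, O = o) = Σ_s P(Π = π | S = s, O = o) · P(S = s | G = g), where the sum ranges over s with P(S = s | G = g, O = o) > 0. -/

import Mathlib

open Classical Finset

/-- Probability of an event on a finite space with weight function `p`. -/
noncomputable def Pr {Ω : Type*} [Fintype Ω] (p : Ω → ℝ) (A : Ω → Prop) : ℝ :=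
  ∑ ω, if A ω then p ω else 0

/-- Conditional probability `P(A | B)`. -/
noncomputable def cPr {Ω : Type*} [Fintype Ω] (p : Ω → ℝ) (A B : Ω → Prop) : ℝ :=
  Pr p (fun ω => A ω ∧ B ω) / Pr p B

/-!
Conditioning on `G = g, O = o` and splitting over the values of `S`, the chain rule writes
`P(Π = π | g, o)` as `Σ_s P(Π = π | s, g, o) · P(S = s | g, o)`. Terms with
`P(S = s | g, o) = 0` vanish; in the others, sufficiency turns the first factor into
`P(Π = π | s, o)`, and conditional independence of `S` and `O` given `G` turns the second
into `P(S = s | g)`.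
-/

section Pr

variable {Ω : Type*} [Fintype Ω] (p : Ω → ℝ)

lemma Pr_congr {A B : Ω → Prop} (h : ∀ ω, A ω ↔ B ω) : Pr p A = Pr p B :=
  Finset.sum_congr rfl fun ω _ => by rw [h ω]

lemma Pr_nonneg (hp : ∀ ω, 0 ≤ p ω) (A : Ω → Prop) : 0 ≤ Pr p A :=
  Finset.sum_nonneg fun ω _ => by split_ifs <;> simp [hp ω]

lemma Pr_mono (hp : ∀ ω, 0 ≤ p ω) {A B : Ω → Prop} (h : ∀ ω, A ω → B ω) :
    Pr p A ≤ Pr p B :=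
  Finset.sum_le_sum fun ω _ => by
    by_cases hA : A ω
    · simp [hA, h ω hA]
    · by_cases hB : B ω <;> simp [hA, hB, hp ω]

lemma Pr_eq_sum_Pr_and {σ : Type*} [Fintype σ] (S : Ω → σ) (A : Ω → Prop) :
    Pr p A = ∑ s, Pr p (fun ω => A ω ∧ S ω = s) := by
  unfold Pr
  rw [Finset.sum_comm]
  refine Finset.sum_congr rfl fun ω _ => ?_
  by_cases hA : A ω <;> simp [hA]

lemma cPr_nonneg (hp : ∀ ω, 0 ≤ p ω) (A B : Ω → Prop) : 0 ≤ cPr p A B :=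
  div_nonneg (Pr_nonneg p hp _) (Pr_nonneg p hp _)

lemma Pr_and_pos_of_cPr_pos (hp : ∀ ω, 0 ≤ p ω) {A B : Ω → Prop} (h : 0 < cPr p A B) :
    0 < Pr p (fun ω => A ω ∧ B ω) := by
  refine (Pr_nonneg p hp _).lt_of_ne fun h0 => h.ne' ?_
  rw [cPr, ← h0, zero_div]

/-- If `P(B ∧ C) = 0`, both sides are `0` (as `0 / 0 = 0`), so no positivity is assumed. -/
lemma cPr_and_eq_mul (hp : ∀ ω, 0 ≤ p ω) (A B C : Ω → Prop) :
    cPr p (fun ω => A ω ∧ B ω) C = cPr p A (fun ω => B ω ∧ C ω) * cPr p B C := by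
  have hassoc : Pr p (fun ω => (A ω ∧ B ω) ∧ C ω) = Pr p (fun ω => A ω ∧ B ω ∧ C ω) :=
    Pr_congr p fun ω => and_assoc
  rcases (Pr_nonneg p hp fun ω => B ω ∧ C ω).lt_or_eq with hBC | hBC
  · rw [cPr, cPr, cPr, hassoc, div_mul_div_cancel₀ hBC.ne']
  · have hABC : Pr p (fun ω => A ω ∧ B ω ∧ C ω) = 0 :=
      le_antisymm (hBC ▸ Pr_mono p hp fun ω h => h.2) (Pr_nonneg p hp _)
    rw [cPr, cPr, cPr, hassoc, hABC, ← hBC]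
    simp

lemma cPr_eq_sum_cPr_mul (hp : ∀ ω, 0 ≤ p ω) {σ : Type*} [Fintype σ] (S : Ω → σ)
    (A C : Ω → Prop) :
    cPr p A C = ∑ s, cPr p A (fun ω => S ω = s ∧ C ω) * cPr p (fun ω => S ω = s) C := by
  rw [cPr, Pr_eq_sum_Pr_and p S, Finset.sum_div]
  refine Finset.sum_congr rfl fun s _ => ?_
  rw [← cPr_and_eq_mul p hp, cPr]
  congr 1
  exact Pr_congr p fun ω => and_right_comm

lemma cPr_and_eq_of_condIndep {A B C : Ω → Prop} (hC : Pr p C ≠ 0)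
    (hCB : Pr p (fun ω => C ω ∧ B ω) ≠ 0)
    (h : cPr p (fun ω => A ω ∧ B ω) C = cPr p A C * cPr p B C) :
    cPr p A (fun ω => C ω ∧ B ω) = cPr p A C := by
  have hABC : Pr p (fun ω => (A ω ∧ B ω) ∧ C ω) = Pr p (fun ω => A ω ∧ C ω ∧ B ω) :=
    Pr_congr p fun ω => by tauto
  have hBC : Pr p (fun ω => B ω ∧ C ω) = Pr p (fun ω => C ω ∧ B ω) :=
    Pr_congr p fun ω => and_comm
  rw [cPr, cPr, cPr, hABC, hBC] at h
  rw [cPr, cPr, div_eq_div_iff hCB hC]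
  field_simp at h
  linarith

end Pr

theorem stmt0_general {Ω γ σ θ ρ : Type*} [Fintype Ω] [Fintype σ]
    (p : Ω → ℝ) (hp : ∀ ω, 0 ≤ p ω)
    (G : Ω → γ) (S : Ω → σ) (O : Ω → θ) (Pol : Ω → ρ)
    (h1 : ∀ (s : σ) (g : γ) (o : θ) (π : ρ),
      0 < Pr p (fun ω => S ω = s ∧ G ω = g ∧ O ω = o) →
      cPr p (fun ω => Pol ω = π) (fun ω => S ω = s ∧ G ω = g ∧ O ω = o)
        = cPr p (fun ω => Pol ω = π) (fun ω => S ω = s ∧ O ω = o))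
    (h2 : ∀ (s : σ) (g : γ) (o : θ), 0 < Pr p (fun ω => G ω = g) →
      cPr p (fun ω => S ω = s ∧ O ω = o) (fun ω => G ω = g)
        = cPr p (fun ω => S ω = s) (fun ω => G ω = g)
          * cPr p (fun ω => O ω = o) (fun ω => G ω = g))
    (g : γ) (o : θ) (π : ρ)
    (hpos : 0 < Pr p (fun ω => G ω = g ∧ O ω = o)) :
    cPr p (fun ω => Pol ω = π) (fun ω => G ω = g ∧ O ω = o)
      = ∑ s ∈ Finset.univ.filter
            (fun s : σ =>
              0 < cPr p (fun ω => S ω = s) (fun ω => G ω = g ∧ O ω = o)),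
          cPr p (fun ω => Pol ω = π) (fun ω => S ω = s ∧ O ω = o)
            * cPr p (fun ω => S ω = s) (fun ω => G ω = g) := by
  have hG : 0 < Pr p (fun ω => G ω = g) := hpos.trans_le (Pr_mono p hp fun ω h => h.1)
  rw [cPr_eq_sum_cPr_mul p hp S, Finset.sum_filter]
  refine Finset.sum_congr rfl fun s _ => ?_
  split_ifs with hSGO
  · rw [h1 s g o π (Pr_and_pos_of_cPr_pos p hp hSGO),
      cPr_and_eq_of_condIndep p hG.ne' hpos.ne' (h2 s g o hG)]
  · rw [← (cPr_nonneg p hp _ _).eq_of_not_lt hSGO, mul_zero]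

/-- CAPER Proposition (factorization of success probability):
under task-symbolic sufficiency and conditional independence of S and O given G,
`P(Π = π | G = g, O = o) = Σ_s P(Π = π | S = s, O = o) · P(S = s | G = g)`,
the sum ranging over s with `P(S = s | G = g, O = o) > 0`. -/
theorem stmt0 {Ω γ σ θ ρ : Type*} [Fintype Ω] [Fintype σ]
    (p : Ω → ℝ) (hp : ∀ ω, 0 ≤ p ω) (hsum : ∑ ω, p ω = 1)
    (G : Ω → γ) (S : Ω → σ) (O : Ω → θ) (Pol : Ω → ρ)
    (h1 : ∀ (s : σ) (g : γ) (o : θ) (π : ρ),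
      0 < Pr p (fun ω => S ω = s ∧ G ω = g ∧ O ω = o) →
      cPr p (fun ω => Pol ω = π) (fun ω => S ω = s ∧ G ω = g ∧ O ω = o)
        = cPr p (fun ω => Pol ω = π) (fun ω => S ω = s ∧ O ω = o))
    (h2 : ∀ (s : σ) (g : γ) (o : θ), 0 < Pr p (fun ω => G ω = g) →
      cPr p (fun ω => S ω = s ∧ O ω = o) (fun ω => G ω = g)
        = cPr p (fun ω => S ω = s) (fun ω => G ω = g)
          * cPr p (fun ω => O ω = o) (fun ω => G ω = g))
    (g : γ) (o : θ) (π : ρ)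
    (hpos : 0 < Pr p (fun ω => G ω = g ∧ O ω = o)) :
    cPr p (fun ω => Pol ω = π) (fun ω => G ω = g ∧ O ω = o)
      = ∑ s ∈ Finset.univ.filter
            (fun s : σ =>
              0 < cPr p (fun ω => S ω = s) (fun ω => G ω = g ∧ O ω = o)),
          cPr p (fun ω => Pol ω = π) (fun ω => S ω = s ∧ O ω = o)
            * cPr p (fun ω => S ω = s) (fun ω => G ω = g) :=
  stmt0_general p hp G S O Pol h1 h2 g o π hpos
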